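/- The real dimensions of the kernel and image of the tangent map DΨ of the edge-length map on the space of q-gons (at a nondegenerate polygon) are both q − 1, and they sum to 2q − 2 = dim_ℝ(ℂ^{q−1}). -/

import Mathlib

open Complex

/-!
Away from `0` each edge length `‖W α‖` has derivative `ξ ↦ Re (Z α * conj (ξ α)) / ‖Z α‖`,
and these components are jointly onto `ℝ^{q-1}`: moving `Z α` along itself by `t α / ‖Z α‖`
realises any prescribed change `t`. The perimeter component is minus their sum, so `DΨ` is a
surjection followed by the injection `v ↦ (v, -∑ v)`. Its image thus has dimension `q - 1`, and
rank–nullity on `ℂ^{q-1} ≅ ℝ^{2(q-1)}` leaves `q - 1` for the kernel.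
-/

theorem hasFDerivAt_norm {E : Type*} [NormedAddCommGroup E] [InnerProductSpace ℝ E] {x : E}
    (hx : x ≠ 0) : HasFDerivAt (‖·‖) (‖x‖⁻¹ • innerSL ℝ x) x := by
  have hsqrt := (hasStrictFDerivAt_norm_sq x).hasFDerivAt.sqrt (by positivity)
  simp only [Real.sqrt_sq (norm_nonneg _)] at hsqrt
  convert hsqrt using 1
  rw [← ofNat_smul_eq_nsmul ℝ, smul_smul]
  field_simp

open Module ContinuousLinearMap

section EdgeLengths

variable {ι : Type*} {Z : ι → ℂ}

noncomputable def edgeLengthDeriv (Z : ι → ℂ) : (ι → ℂ) →L[ℝ] (ι → ℝ) :=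
  pi fun α => (‖Z α‖⁻¹ • innerSL ℝ (Z α)).comp (proj α)

theorem edgeLengthDeriv_apply (ξ : ι → ℂ) (α : ι) :
    edgeLengthDeriv Z ξ α = (Z α * starRingEnd ℂ (ξ α)).re / ‖Z α‖ := by
  rw [edgeLengthDeriv, pi_apply, comp_apply, smul_apply, innerSL_apply_apply, proj_apply,
    real_inner_comm, Complex.inner, smul_eq_mul, inv_mul_eq_div]

theorem hasFDerivAt_edgeLengths [Fintype ι] (hZ : ∀ α, Z α ≠ 0) :
    HasFDerivAt (fun (W : ι → ℂ) α => ‖W α‖) (edgeLengthDeriv Z) Z :=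
  hasFDerivAt_pi.2 fun α => (hasFDerivAt_norm (hZ α)).comp Z (hasFDerivAt_apply α Z)

theorem edgeLengthDeriv_surjective (hZ : ∀ α, Z α ≠ 0) :
    Function.Surjective (edgeLengthDeriv Z) := by
  intro t
  refine ⟨fun α => (t α / ‖Z α‖) • Z α, funext fun α => ?_⟩
  have hZα : ‖Z α‖ ≠ 0 := norm_ne_zero_iff.2 (hZ α)
  simp only [edgeLengthDeriv, pi_apply, coe_comp, Function.comp_apply, proj_apply, smul_apply,
    innerSL_apply_apply, real_inner_smul_right, real_inner_self_eq_norm_sq, smul_eq_mul]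
  field_simp

variable [Fintype ι]

variable (ι) in
noncomputable def appendNegSum : (ι → ℝ) →L[ℝ] (ι → ℝ) × ℝ :=
  (ContinuousLinearMap.id ℝ _).prod (-∑ α, proj α)

theorem appendNegSum_apply (v : ι → ℝ) : appendNegSum ι v = (v, -∑ α, v α) := by
  simp [appendNegSum, sum_apply]

theorem appendNegSum_injective : Function.Injective (appendNegSum ι) :=
  fun v w h => by simpa [appendNegSum_apply] using congrArg Prod.fst h

noncomputable def edgeLengthMapDeriv (Z : ι → ℂ) : (ι → ℂ) →L[ℝ] (ι → ℝ) × ℝ :=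
  (appendNegSum ι).comp (edgeLengthDeriv Z)

theorem edgeLengthMapDeriv_apply (ξ : ι → ℂ) :
    edgeLengthMapDeriv Z ξ = ((fun α => (Z α * starRingEnd ℂ (ξ α)).re / ‖Z α‖),
      -∑ α, (Z α * starRingEnd ℂ (ξ α)).re / ‖Z α‖) := by
  have hfst : edgeLengthDeriv Z ξ = fun α => (Z α * starRingEnd ℂ (ξ α)).re / ‖Z α‖ :=
    funext (edgeLengthDeriv_apply ξ)
  rw [edgeLengthMapDeriv, comp_apply, appendNegSum_apply, hfst]

theorem hasFDerivAt_edgeLengthMap (P : ℝ) (hZ : ∀ α, Z α ≠ 0) :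
    HasFDerivAt (fun W : ι → ℂ => ((fun α => ‖W α‖, P - ∑ α, ‖W α‖) : (ι → ℝ) × ℝ))
      (edgeLengthMapDeriv Z) Z := by
  have hsplit : (fun W : ι → ℂ => ((fun α => ‖W α‖, P - ∑ α, ‖W α‖) : (ι → ℝ) × ℝ)) =
      fun W => (0, P) + appendNegSum ι (fun α => ‖W α‖) := by
    funext W
    simp [appendNegSum_apply, sub_eq_add_neg]
  rw [hsplit]
  exact ((appendNegSum ι).hasFDerivAt.comp Z (hasFDerivAt_edgeLengths hZ)).const_add _

theorem finrank_range_edgeLengthMapDeriv (hZ : ∀ α, Z α ≠ 0) :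
    finrank ℝ (LinearMap.range (edgeLengthMapDeriv Z).toLinearMap) = Fintype.card ι := by
  rw [edgeLengthMapDeriv, toLinearMap_comp, LinearMap.range_comp_of_range_eq_top _
    (LinearMap.range_eq_top.2 (edgeLengthDeriv_surjective hZ)),
    LinearMap.finrank_range_of_inj appendNegSum_injective, finrank_fintype_fun_eq_card]

theorem finrank_ker_edgeLengthMapDeriv (hZ : ∀ α, Z α ≠ 0) :
    finrank ℝ (LinearMap.ker (edgeLengthMapDeriv Z).toLinearMap) = Fintype.card ι := by
  have hrn := LinearMap.finrank_range_add_finrank_ker (edgeLengthMapDeriv Z).toLinearMap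
  rw [finrank_range_edgeLengthMapDeriv hZ, finrank_pi_fintype] at hrn
  simp only [Complex.finrank_real_complex, Finset.sum_const, Finset.card_univ, smul_eq_mul] at hrn
  omega

end EdgeLengths

theorem edge_length_map_rank_nullity_general
    (q : ℕ) (P : ℝ) (Z : Fin (q - 1) → ℂ) (hZ : ∀ α, Z α ≠ 0) :
    ∃ D : (Fin (q - 1) → ℂ) →L[ℝ] (Fin (q - 1) → ℝ) × ℝ,
      HasFDerivAt (fun W : Fin (q - 1) → ℂ =>
        ((fun α => ‖W α‖, P - ∑ α, ‖W α‖) : (Fin (q - 1) → ℝ) × ℝ)) D Z ∧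
      (∀ ξ, D ξ = ((fun α => (Z α * (starRingEnd ℂ) (ξ α)).re / ‖Z α‖),
        - ∑ α, (Z α * (starRingEnd ℂ) (ξ α)).re / ‖Z α‖)) ∧
      Module.finrank ℝ (LinearMap.ker D.toLinearMap) = q - 1 ∧
      Module.finrank ℝ (LinearMap.range D.toLinearMap) = q - 1 ∧
      (q - 1) + (q - 1) = Module.finrank ℝ (Fin (q - 1) → ℂ) := by
  refine ⟨edgeLengthMapDeriv Z, hasFDerivAt_edgeLengthMap P hZ, edgeLengthMapDeriv_apply,
    ?_, ?_, ?_⟩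
  · simpa using finrank_ker_edgeLengthMapDeriv hZ
  · simpa using finrank_range_edgeLengthMapDeriv hZ
  · simp [finrank_pi_fintype, Complex.finrank_real_complex, mul_two]

/-- At a nondegenerate polygon, the kernel and image of the tangent map of the
fixed-perimeter edge-length map both have real dimension `q − 1`, summing to
`2q − 2 = dim_ℝ ℂ^{q−1}`. -/
theorem edge_length_map_rank_nullity
    (q : ℕ) (hq : 3 ≤ q) (P : ℝ) (Z : Fin (q - 1) → ℂ) (hZ : ∀ α, Z α ≠ 0) :
    ∃ D : (Fin (q - 1) → ℂ) →L[ℝ] (Fin (q - 1) → ℝ) × ℝ,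
      HasFDerivAt (fun W : Fin (q - 1) → ℂ =>
        ((fun α => ‖W α‖, P - ∑ α, ‖W α‖) : (Fin (q - 1) → ℝ) × ℝ)) D Z ∧
      (∀ ξ, D ξ = ((fun α => (Z α * (starRingEnd ℂ) (ξ α)).re / ‖Z α‖),
        - ∑ α, (Z α * (starRingEnd ℂ) (ξ α)).re / ‖Z α‖)) ∧
      Module.finrank ℝ (LinearMap.ker D.toLinearMap) = q - 1 ∧
      Module.finrank ℝ (LinearMap.range D.toLinearMap) = q - 1 ∧
      (q - 1) + (q - 1) = Module.finrank ℝ (Fin (q - 1) → ℂ) :=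
  edge_length_map_rank_nullity_general q P Z hZ
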